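/- arXiv:2111.06245 — 3 statements merged into one kernel-verified Lean document; each statement's English description precedes it below -/
import Mathlib

section
/- Let l ≥ 1 and let q(Y) = y₁² − y₂² − ⋯ − y_l² be the quadratic form of signature (1, l−1) on ℝ^l. Let h(Y) be the l×l real symmetric matrix whose (i,j) entry is (ε_i ε_j y_i y_j)/q(Y)² + ε_i δ_{ij}/(2q(Y)), where ε₁ = −1 and ε_i = 1 for i ≥ 2. Then for Y with q(Y) ≠ 0, the matrix h(Y) is invertible with inverse given by the matrix whose (i,j) entry is 4·y_i·y_j + 2·q(Y)·ε_i·δ_{ij}, and det h(Y) = 1/(2^l · q(Y)^l). -/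
/-!
With `D = diagonal ε` and `P = Y Yᵀ` we have `D² = 1` and `P D P = (Yᵀ D Y) P = -q P`. Hence
`h = q⁻² D P D + (2q)⁻¹ D` and `4 P + 2q D` multiply to `1`: the `D P` terms come with
coefficients `-4/q + 2/q + 2/q = 0`. The matrix determinant lemma gives
`det (2q D + 4 Y Yᵀ) = (2q)^l det D (1 + (2/q) Yᵀ D Y) = (2q)^l (-1) (-1)`, and `det h` is
its inverse.
-/

open Matrix

theorem smul_conj_add_smul_mul_smul_add_smul_eq_one {K A : Type*} [Field K] [Ring A] [Algebra K A]
    {d p : A} {q : K} (h2 : (2 : K) ≠ 0) (hq : q ≠ 0) (hd : d * d = 1)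
    (hp : p * d * p = (-q) • p) :
    ((q ^ 2)⁻¹ • (d * p * d) + (2 * q)⁻¹ • d) * ((4 : K) • p + (2 * q) • d) = 1 := by
  have hdpdp : d * p * d * p = (-q) • (d * p) := by
    rw [← mul_smul_comm, ← hp]; simp only [mul_assoc]
  have hdpdd : d * p * d * d = d * p := by rw [mul_assoc _ d d, hd, mul_one]
  have hcoeff : (q ^ 2)⁻¹ * 4 * -q + (2 * q)⁻¹ * 4 + (q ^ 2)⁻¹ * (2 * q) = 0 := by
    field_simp; ring
  have h2q : (2 * q)⁻¹ * (2 * q) = 1 := inv_mul_cancel₀ (mul_ne_zero h2 hq)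
  simp only [add_mul, mul_add, smul_mul_smul_comm, hdpdp, hdpdd, hd, smul_smul]
  rw [← add_smul, ← add_assoc, ← add_smul, hcoeff, h2q, zero_smul, zero_add, one_smul]

namespace Matrix

variable {n α : Type*} [Fintype n]

theorem vecMulVec_mul_mul_vecMulVec [CommRing α] (u v w x : n → α) (M : Matrix n n α) :
    vecMulVec u v * M * vecMulVec w x = (v ⬝ᵥ (M *ᵥ w)) • vecMulVec u x := by
  rw [vecMulVec_mul, vecMulVec_mul_vecMulVec, dotProduct_mulVec, vecMulVec_smul]

theorem det_add_vecMulVec [DecidableEq n] [CommRing α] {A : Matrix n n α} (hA : IsUnit A.det)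
    (u v : n → α) :
    (A + vecMulVec u v).det = A.det * (1 + v ⬝ᵥ (A⁻¹ *ᵥ u)) := by
  rw [vecMulVec_eq Unit, det_add_replicateCol_mul_replicateRow hA, Matrix.mul_assoc,
    ← replicateCol_mulVec, det_unique (1 + _)]
  rfl

theorem det_smul_add_vecMulVec [DecidableEq n] [Field α] {D : Matrix n n α} (hD : D * D = 1)
    {c : α} (hc : c ≠ 0) (u v : n → α) :
    (c • D + vecMulVec u v).det =
      c ^ Fintype.card n * D.det * (1 + c⁻¹ * (v ⬝ᵥ (D *ᵥ u))) := by
  have hinv : (c • D)⁻¹ = c⁻¹ • D :=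
    inv_eq_left_inv (by rw [smul_mul_smul_comm, hD, inv_mul_cancel₀ hc, one_smul])
  have hunit : IsUnit (c • D).det := by
    rw [det_smul]
    exact (isUnit_iff_ne_zero.2 (pow_ne_zero _ hc)).mul (isUnit_det_of_left_inverse hD)
  rw [det_add_vecMulVec hunit, hinv, det_smul, smul_mulVec, dotProduct_smul, smul_eq_mul]

end Matrix

theorem prod_lorentzSign_eq_neg_one {l : ℕ} (hl : 1 ≤ l) {ε : Fin l → ℝ}
    (hε : ∀ i : Fin l, ε i = if i.val = 0 then -1 else 1) : ∏ i, ε i = -1 := by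
  obtain ⟨k, rfl⟩ := Nat.exists_eq_add_of_le' hl
  simp [hε]

theorem diagonal_lorentzSign_mul_self {l : ℕ} {ε : Fin l → ℝ}
    (hε : ∀ i : Fin l, ε i = if i.val = 0 then -1 else 1) :
    diagonal ε * diagonal ε = 1 := by
  rw [diagonal_mul_diagonal, ← diagonal_one]
  congr 1
  funext i
  rw [hε]
  split_ifs <;> norm_num

theorem det_four_vecMulVec_add_smul_diagonal_lorentzSign {l : ℕ} (hl : 1 ≤ l)
    {Y ε : Fin l → ℝ} (hε : ∀ i : Fin l, ε i = if i.val = 0 then -1 else 1) {q : ℝ} (hq0 : q ≠ 0)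
    (hYDY : Y ⬝ᵥ (diagonal ε *ᵥ Y) = -q) :
    ((4 : ℝ) • vecMulVec Y Y + (2 * q) • diagonal ε).det = (2 * q) ^ l := by
  rw [add_comm, ← smul_vecMulVec, det_smul_add_vecMulVec (diagonal_lorentzSign_mul_self hε)
    (by positivity), Fintype.card_fin, det_diagonal, prod_lorentzSign_eq_neg_one hl hε,
    mulVec_smul, dotProduct_smul, hYDY]
  field_simp
  ring

/-- The hermitian metric matrix `h(Y)` of the Kähler form on the orthogonal tube domain,
for the quadratic form `q(Y) = y₁² - y₂² - ⋯ - y_l²`: with `ε₁ = -1`, `ε_i = 1` for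
`i ≥ 2`, and `h(Y)_{ij} = ε_i ε_j y_i y_j / q(Y)² + ε_i δ_{ij} / (2 q(Y))`, the inverse
of `h(Y)` is the matrix with entries `4 y_i y_j + 2 q(Y) ε_i δ_{ij}`, and
`det h(Y) = 1 / (2^l q(Y)^l)`. -/
theorem stmt_8 (l : ℕ) (hl : 1 ≤ l) (Y : Fin l → ℝ)
    (ε : Fin l → ℝ) (hε : ∀ i : Fin l, ε i = if i.val = 0 then -1 else 1)
    (q : ℝ) (hq : q = -∑ i : Fin l, ε i * Y i ^ 2) (hq0 : q ≠ 0)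
    (h hinv : Matrix (Fin l) (Fin l) ℝ)
    (hh : ∀ i j : Fin l,
      h i j = ε i * ε j * Y i * Y j / q ^ 2 + (if i = j then ε i / (2 * q) else 0))
    (hhinv : ∀ i j : Fin l,
      hinv i j = 4 * Y i * Y j + (if i = j then 2 * q * ε i else 0)) :
    h * hinv = 1 ∧ hinv * h = 1 ∧ h.det = 1 / (2 ^ l * q ^ l) := by
  have hD := diagonal_lorentzSign_mul_self hε
  have hYDY : Y ⬝ᵥ (diagonal ε *ᵥ Y) = -q := by
    simp only [hq, neg_neg, dotProduct, mulVec_diagonal]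
    exact Finset.sum_congr rfl fun i _ => by ring
  have hP : vecMulVec Y Y * diagonal ε * vecMulVec Y Y = (-q) • vecMulVec Y Y := by
    rw [vecMulVec_mul_mul_vecMulVec, hYDY]
  have hh' :
      h = (q ^ 2)⁻¹ • (diagonal ε * vecMulVec Y Y * diagonal ε) + (2 * q)⁻¹ • diagonal ε := by
    ext i j
    simp only [hh, Matrix.add_apply, Matrix.smul_apply, mul_diagonal, diagonal_mul,
      vecMulVec_apply, diagonal_apply, smul_eq_mul]
    split_ifs <;> ring
  have hhinv' : hinv = (4 : ℝ) • vecMulVec Y Y + (2 * q) • diagonal ε := by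
    ext i j
    simp only [hhinv, Matrix.add_apply, Matrix.smul_apply, vecMulVec_apply, diagonal_apply,
      smul_eq_mul]
    split_ifs <;> ring
  have hmul : h * hinv = 1 := by
    rw [hh', hhinv']
    exact smul_conj_add_smul_mul_smul_add_smul_eq_one two_ne_zero hq0 hD hP
  have hdetinv : hinv.det = (2 * q) ^ l := by
    rw [hhinv', det_four_vecMulVec_add_smul_diagonal_lorentzSign hl hε hq0 hYDY]
  refine ⟨hmul, mul_eq_one_comm.mp hmul, ?_⟩
  have hdet : h.det * hinv.det = 1 := by rw [← det_mul, hmul, det_one]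
  rw [eq_inv_of_mul_eq_one_left hdet, hdetinv]
  ring
end

section
/- Let l ≥ 2 and consider the Siegel domain S_t ⊂ ℝ^l + i·C consisting of Z = X + iY with x₁² + x₂² + |q(X_D)| < t², 1/t < y₁, y₁² < t²·q(Y), and |q(Y_D)| < t²·y₁², where q(Y) = y₁y₂ + q(Y_D) and q(Y_D) = −y₃² − ⋯ − y_l². If real exponents p₁, p₂, p satisfy p₂ + p < l − 1 and p₁ + p₂ + 2p < l, then the integral ∫_{S_t} y₁^{p₁} · y₂^{p₂} · q(Y)^p · q(Y)^{−l} dX dY is finite. -/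
open MeasureTheory

/-- `q(Y_D) = -y₃² - ⋯ - y_l²` in the coordinates of the Siegel domain (`l = n + 2`). -/
def qD (n : ℕ) (Y : Fin (n + 2) → ℝ) : ℝ := -∑ i : Fin n, Y i.succ.succ ^ 2

/-- `q(Y) = y₁ y₂ + q(Y_D)`. -/
def qf (n : ℕ) (Y : Fin (n + 2) → ℝ) : ℝ := Y 0 * Y 1 + qD n Y

/-- The Siegel domain `S_t`: pairs `Z = X + iY` with
`x₁² + x₂² + |q(X_D)| < t²`, `1/t < y₁`, `y₁² < t² q(Y)` and `|q(Y_D)| < t² y₁²`. -/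
def SiegelDomain (n : ℕ) (t : ℝ) : Set ((Fin (n + 2) → ℝ) × (Fin (n + 2) → ℝ)) :=
  {p | (p.1 0) ^ 2 + (p.1 1) ^ 2 + |qD n p.1| < t ^ 2 ∧
       1 / t < p.2 0 ∧ (p.2 0) ^ 2 < t ^ 2 * qf n p.2 ∧ |qD n p.2| < t ^ 2 * (p.2 0) ^ 2}

/-!
On `S_t` the variable `X` stays in the ball of radius `t`, while `Y` satisfies `y₁ > 1/t`,
`y₁ < t² y₂`, `|y_i| < t y₁` for `i ≥ 3`, and `q(Y)` is comparable to `y₁ y₂`. Hence the integrand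
is at most a constant times `y₁^a y₂^b` with `a = p₁ + p - l`, `b = p₂ + p - l`. Trading a factor
`y₂^δ` for `y₁^δ` (as `y₂ > y₁ / t²`) and inserting `1 ≤ (2 t y₁)^s (1 + |y_i|)^(-s)` for `i ≥ 3`
dominates it by the product of the integrable functions `y₁^(a - δ + s (l - 2))` on `(1/t, ∞)`,
`y₂^(b + δ)` on `(1/t³, ∞)` and `(1 + |y_i|)^(-s)`. The two hypotheses on the exponents are exactly
what is needed to choose `δ ≥ 0` and `s > 1` making the first two exponents less than `-1`.
-/

open Set

lemma abs_qD (n : ℕ) (Y : Fin (n + 2) → ℝ) : |qD n Y| = ∑ i : Fin n, Y i.succ.succ ^ 2 := by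
  rw [qD, abs_neg, abs_of_nonneg (by positivity)]

lemma qD_nonpos (n : ℕ) (Y : Fin (n + 2) → ℝ) : qD n Y ≤ 0 := by
  rw [qD, neg_nonpos]
  positivity

lemma sq_le_abs_qD (n : ℕ) (Y : Fin (n + 2) → ℝ) (i : Fin n) : Y i.succ.succ ^ 2 ≤ |qD n Y| :=
  abs_qD n Y ▸ Finset.single_le_sum (fun j _ => sq_nonneg (Y j.succ.succ)) (Finset.mem_univ i)

lemma sq_le_sq_add_sq_add_abs_qD (n : ℕ) (X : Fin (n + 2) → ℝ) (j : Fin (n + 2)) :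
    X j ^ 2 ≤ X 0 ^ 2 + X 1 ^ 2 + |qD n X| := by
  have h₀ := sq_nonneg (X 0)
  have h₁ := sq_nonneg (X 1)
  have hD := abs_nonneg (qD n X)
  induction j using Fin.cases with
  | zero => linarith
  | succ j =>
    induction j using Fin.cases with
    | zero => rw [Fin.succ_zero_eq_one]; linarith
    | succ k => linarith [sq_le_abs_qD n X k]

lemma qf_le_mul (n : ℕ) (Y : Fin (n + 2) → ℝ) : qf n Y ≤ Y 0 * Y 1 := by
  linarith [qD_nonpos n Y, show qf n Y = Y 0 * Y 1 + qD n Y from rfl]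

@[fun_prop]
lemma continuous_qD (n : ℕ) : Continuous (qD n) := by
  unfold qD
  fun_prop

@[fun_prop]
lemma continuous_qf (n : ℕ) : Continuous (qf n) := by
  unfold qf
  fun_prop

lemma measurableSet_siegelDomain (n : ℕ) (t : ℝ) : MeasurableSet (SiegelDomain n t) := by
  simp only [SiegelDomain, ofPred_and]
  refine .inter ?_ (.inter ?_ (.inter ?_ ?_)) <;> exact measurableSet_lt (by fun_prop) (by fun_prop)

namespace SiegelDomain

variable {n : ℕ} {t : ℝ} {z : (Fin (n + 2) → ℝ) × (Fin (n + 2) → ℝ)}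

lemma fst_mem_closedBall (ht : 0 < t) (hz : z ∈ SiegelDomain n t) :
    z.1 ∈ Metric.closedBall 0 t := by
  rw [Metric.mem_closedBall, dist_pi_le_iff ht.le]
  intro j
  rw [Pi.zero_apply, Real.dist_eq, sub_zero, ← sq_le_sq₀ (abs_nonneg _) ht.le, sq_abs]
  exact (sq_le_sq_add_sq_add_abs_qD n z.1 j).trans hz.1.le

lemma inv_lt_snd_zero (hz : z ∈ SiegelDomain n t) : t⁻¹ < z.2 0 :=
  one_div t ▸ hz.2.1

lemma snd_zero_pos (ht : 0 < t) (hz : z ∈ SiegelDomain n t) : 0 < z.2 0 :=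
  (inv_pos.2 ht).trans (inv_lt_snd_zero hz)

lemma qf_pos (ht : 0 < t) (hz : z ∈ SiegelDomain n t) : 0 < qf n z.2 := by
  have h₀ := snd_zero_pos ht hz
  exact pos_of_mul_pos_right ((by positivity : 0 < z.2 0 ^ 2).trans hz.2.2.1) (by positivity)

lemma snd_zero_lt (ht : 0 < t) (hz : z ∈ SiegelDomain n t) : z.2 0 < t ^ 2 * z.2 1 := by
  have h₀ := snd_zero_pos ht hz
  have : z.2 0 * z.2 0 < z.2 0 * (t ^ 2 * z.2 1) := by
    nlinarith [hz.2.2.1, qf_le_mul n z.2, pow_pos ht 2]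
  exact lt_of_mul_lt_mul_left this h₀.le

lemma snd_one_pos (ht : 0 < t) (hz : z ∈ SiegelDomain n t) : 0 < z.2 1 :=
  pos_of_mul_pos_right ((snd_zero_pos ht hz).trans (snd_zero_lt ht hz)) (by positivity)

lemma inv_pow_three_lt_snd_one (ht : 0 < t) (hz : z ∈ SiegelDomain n t) : (t ^ 3)⁻¹ < z.2 1 := by
  have h := (inv_lt_snd_zero hz).trans (snd_zero_lt ht hz)
  rw [inv_lt_iff_one_lt_mul₀ ht] at h
  rw [inv_lt_iff_one_lt_mul₀ (by positivity)]
  linarith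

-- `y₁ y₂ = q - q(Y_D) < q + t² y₁² < (1 + t⁴) q`
lemma mul_le_one_add_pow_four_mul_qf (hz : z ∈ SiegelDomain n t) :
    z.2 0 * z.2 1 ≤ (1 + t ^ 4) * qf n z.2 := by
  obtain ⟨-, -, hq, hD⟩ := hz
  have : z.2 0 * z.2 1 = qf n z.2 - qD n z.2 := by simp only [qf]; ring
  nlinarith [neg_abs_le (qD n z.2), sq_nonneg t]

lemma one_add_abs_le (ht : 0 < t) (hz : z ∈ SiegelDomain n t) (i : Fin n) :
    1 + |z.2 i.succ.succ| ≤ 2 * t * z.2 0 := by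
  have h₀ := snd_zero_pos ht hz
  have hw : |z.2 i.succ.succ| < t * z.2 0 := by
    rw [← sq_lt_sq₀ (abs_nonneg _) (by positivity), sq_abs, mul_pow]
    exact (sq_le_abs_qD n z.2 i).trans_lt hz.2.2.2
  have h₁ : 1 < t * z.2 0 := by
    rw [← inv_lt_iff_one_lt_mul₀' ht]
    exact inv_lt_snd_zero hz
  linarith

end SiegelDomain

lemma exists_splitting_exponents {a b n : ℝ} (hb : b < -1) (hab : a + b + n < -2) :
    ∃ δ s : ℝ, 0 ≤ δ ∧ 1 < s ∧ b + δ < -1 ∧ a - δ + s * n < -1 := by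
  obtain ⟨ε, hε, hεn⟩ := exists_pos_mul_lt (show 0 < -2 - (a + b + n) by linarith) n
  obtain ⟨δ, hδ, hδb⟩ := exists_between (max_lt (show (0 : ℝ) < -1 - b by linarith)
    (show a + (1 + ε) * n + 1 < -1 - b by linarith))
  exact ⟨δ, 1 + ε, (le_max_left _ _).trans hδ.le, by linarith, by linarith,
    by linarith [(le_max_right _ _).trans_lt hδ]⟩

lemma rpow_le_max_one_mul_rpow {c x q s : ℝ} (hc : 0 < c) (hx : 0 < x) (hcq : c * x ≤ q)
    (hqx : q ≤ x) : q ^ s ≤ max 1 (c ^ s) * x ^ s := by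
  rcases le_total 0 s with hs | hs
  · exact (Real.rpow_le_rpow ((by positivity : 0 ≤ c * x).trans hcq) hqx hs).trans
      (le_mul_of_one_le_left (by positivity) (le_max_left _ _))
  · calc q ^ s ≤ (c * x) ^ s := Real.rpow_le_rpow_of_nonpos (by positivity) hcq hs
      _ = c ^ s * x ^ s := Real.mul_rpow hc.le hx.le
      _ ≤ max 1 (c ^ s) * x ^ s := by gcongr; exact le_max_right _ _

lemma rpow_le_rpow_mul_rpow_of_le_mul {x y u b δ : ℝ} (hx : 0 < x) (hy : 0 < y) (hu : 0 < u)
    (hxy : x ≤ u * y) (hδ : 0 ≤ δ) : y ^ b ≤ u ^ δ * x ^ (-δ) * y ^ (b + δ) := by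
  have hxuy : x / u ≤ y := by rwa [div_le_iff₀' hu]
  calc y ^ b = y ^ (-δ) * y ^ (b + δ) := by rw [← Real.rpow_add hy]; ring_nf
    _ ≤ (x / u) ^ (-δ) * y ^ (b + δ) := mul_le_mul_of_nonneg_right
      (Real.rpow_le_rpow_of_nonpos (by positivity) hxuy (neg_nonpos.2 hδ)) (by positivity)
    _ = u ^ δ * x ^ (-δ) * y ^ (b + δ) := by
      rw [Real.div_rpow hx.le hu.le, Real.rpow_neg hu.le, div_inv_eq_mul]
      ring

lemma one_le_rpow_mul_prod_one_add_abs_rpow_neg {n : ℕ} {r s : ℝ} (w : Fin n → ℝ) (hr : 0 ≤ r)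
    (hs : 0 ≤ s) (hw : ∀ i, 1 + |w i| ≤ r) : 1 ≤ r ^ (s * n) * ∏ i, (1 + |w i|) ^ (-s) := by
  rw [Real.rpow_mul_natCast hr, ← Fin.prod_const, ← Finset.prod_mul_distrib]
  refine Finset.one_le_prod fun i _ => ?_
  have hw₀ : 0 < 1 + |w i| := by positivity
  rw [Real.rpow_neg hw₀.le, ← div_eq_mul_inv, one_le_div (by positivity)]
  exact Real.rpow_le_rpow hw₀.le (hw i) hs

lemma rpow_mul_rpow_mul_rpow_mul_rpow_le {n : ℕ} {c u r y₁ y₂ q p₁ p₂ p l δ s : ℝ}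
    (w : Fin n → ℝ) (hc : 0 < c) (hu : 0 < u) (hr : 0 ≤ r) (hy₁ : 0 < y₁) (hy₂ : 0 < y₂)
    (hcq : c * (y₁ * y₂) ≤ q) (hq : q ≤ y₁ * y₂) (hy : y₁ ≤ u * y₂)
    (hw : ∀ i, 1 + |w i| ≤ r * y₁) (hδ : 0 ≤ δ) (hs : 0 ≤ s) :
    y₁ ^ p₁ * y₂ ^ p₂ * q ^ p * q ^ (-l) ≤
      max 1 (c ^ (p - l)) * u ^ δ * r ^ (s * n) *
        (y₁ ^ (p₁ + p - l - δ + s * n) * y₂ ^ (p₂ + p - l + δ) * ∏ i, (1 + |w i|) ^ (-s)) := by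
  set K := max 1 (c ^ (p - l))
  have hq₀ : 0 < q := (by positivity : 0 < c * (y₁ * y₂)).trans_le hcq
  have hqK : q ^ p * q ^ (-l) ≤ K * (y₁ ^ (p - l) * y₂ ^ (p - l)) := by
    rw [← Real.rpow_add hq₀, ← sub_eq_add_neg, ← Real.mul_rpow hy₁.le hy₂.le]
    exact rpow_le_max_one_mul_rpow hc (by positivity) hcq hq
  have hy₂δ := rpow_le_rpow_mul_rpow_of_le_mul (b := p₂ + p - l) hy₁ hy₂ hu hy hδ
  have hw₁ := one_le_rpow_mul_prod_one_add_abs_rpow_neg w (by positivity) hs hw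
  calc y₁ ^ p₁ * y₂ ^ p₂ * q ^ p * q ^ (-l)
      = y₁ ^ p₁ * y₂ ^ p₂ * (q ^ p * q ^ (-l)) := by ring
    _ ≤ y₁ ^ p₁ * y₂ ^ p₂ * (K * (y₁ ^ (p - l) * y₂ ^ (p - l))) := by gcongr
    _ = K * y₁ ^ (p₁ + p - l) * y₂ ^ (p₂ + p - l) := by
      rw [add_sub_assoc, add_sub_assoc, Real.rpow_add hy₁, Real.rpow_add hy₂]
      ring
    _ ≤ K * y₁ ^ (p₁ + p - l) * (u ^ δ * y₁ ^ (-δ) * y₂ ^ (p₂ + p - l + δ)) := by gcongr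
    _ ≤ K * y₁ ^ (p₁ + p - l) * (u ^ δ * y₁ ^ (-δ) * y₂ ^ (p₂ + p - l + δ)) *
          ((r * y₁) ^ (s * n) * ∏ i, (1 + |w i|) ^ (-s)) :=
      le_mul_of_one_le_right (by positivity) hw₁
    _ = K * u ^ δ * r ^ (s * n) *
          (y₁ ^ (p₁ + p - l - δ + s * n) * y₂ ^ (p₂ + p - l + δ) * ∏ i, (1 + |w i|) ^ (-s)) := by
      rw [Real.mul_rpow hr hy₁.le, sub_eq_add_neg (p₁ + p - l) δ, Real.rpow_add hy₁,
        Real.rpow_add hy₁]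
      ring

lemma integrable_mul_mul_prod_succ_succ {E 𝕜 : Type*} [MeasurableSpace E] {μ : Measure E}
    [SigmaFinite μ] [NormedCommRing 𝕜] {n : ℕ} {f₀ f₁ g : E → 𝕜} (h₀ : Integrable f₀ μ)
    (h₁ : Integrable f₁ μ) (hg : Integrable g μ) :
    Integrable (fun Y : Fin (n + 2) → E => f₀ (Y 0) * f₁ (Y 1) * ∏ i : Fin n, g (Y i.succ.succ))
      (Measure.pi fun _ => μ) := by
  let F : Fin (n + 2) → E → 𝕜 := Fin.cons f₀ (Fin.cons f₁ fun _ => g)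
  have := Integrable.fintype_prod (f := F) (μ := fun _ => μ)
    fun i => Fin.cases h₀ (fun j => Fin.cases h₁ (fun _ => hg) j) i
  simpa only [F, Fin.prod_univ_succ, Fin.cons_zero, Fin.cons_succ, Fin.succ_zero_eq_one,
    mul_assoc] using this

open SiegelDomain in
/-- If `p₂ + p < l - 1` and `p₁ + p₂ + 2p < l` (with `l = n + 2 ≥ 2`), then
`∫_{S_t} y₁^{p₁} y₂^{p₂} q(Y)^p q(Y)^{-l} dX dY < ∞`. -/
theorem stmt_11 (n : ℕ) (t : ℝ) (ht : 0 < t) (p₁ p₂ p : ℝ)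
    (h1 : p₂ + p < (n : ℝ) + 2 - 1) (h2 : p₁ + p₂ + 2 * p < (n : ℝ) + 2) :
    IntegrableOn
      (fun z : (Fin (n + 2) → ℝ) × (Fin (n + 2) → ℝ) =>
        (z.2 0) ^ p₁ * (z.2 1) ^ p₂ * (qf n z.2) ^ p * (qf n z.2) ^ (-((n : ℝ) + 2)))
      (SiegelDomain n t) volume := by
  obtain ⟨δ, s, hδ, hs, hβ, hα⟩ := exists_splitting_exponents (n := n)
    (a := p₁ + p - (n + 2)) (b := p₂ + p - (n + 2)) (by linarith) (by linarith)
  have hf₁ : Integrable ((Ioi t⁻¹).indicator (· ^ (p₁ + p - (n + 2) - δ + s * n))) :=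
    (integrableOn_Ioi_rpow_of_lt hα (by positivity)).integrable_indicator measurableSet_Ioi
  have hf₂ : Integrable ((Ioi (t ^ 3)⁻¹).indicator (· ^ (p₂ + p - (n + 2) + δ))) :=
    (integrableOn_Ioi_rpow_of_lt hβ (by positivity)).integrable_indicator measurableSet_Ioi
  have hg : Integrable fun x : ℝ => (1 + |x|) ^ (-s) := by
    simpa using integrable_one_add_norm (E := ℝ) (μ := volume) (r := s) (by simpa)
  have hX : Integrable ((Metric.closedBall (0 : Fin (n + 2) → ℝ) t).indicator fun _ => (1 : ℝ)) :=
    (integrableOn_const measure_closedBall_lt_top.ne).integrable_indicator measurableSet_closedBall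
  rw [IntegrableOn, Measure.volume_eq_prod]
  refine ((hX.mul_prod ((integrable_mul_mul_prod_succ_succ hf₁ hf₂ hg).const_mul
    (max 1 (((1 + t ^ 4)⁻¹) ^ (p - (n + 2))) * (t ^ 2) ^ δ * (2 * t) ^ (s * n)))).restrict).mono'
    (Measurable.aestronglyMeasurable (by fun_prop)) ?_
  filter_upwards [ae_restrict_mem (measurableSet_siegelDomain n t)] with z hz
  have hy₁ := snd_zero_pos ht hz
  have hy₂ := snd_one_pos ht hz
  have hq := qf_pos ht hz
  rw [indicator_of_mem (fst_mem_closedBall ht hz),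
    indicator_of_mem (mem_Ioi.2 (inv_lt_snd_zero hz)),
    indicator_of_mem (mem_Ioi.2 (inv_pow_three_lt_snd_one ht hz)), one_mul,
    Real.norm_of_nonneg (by positivity)]
  exact rpow_mul_rpow_mul_rpow_mul_rpow_le _ (by positivity) (by positivity) (by positivity)
    hy₁ hy₂ (by rw [inv_mul_le_iff₀ (by positivity)]; exact mul_le_one_add_pow_four_mul_qf hz)
    (qf_le_mul n z.2) (snd_zero_lt ht hz).le (one_add_abs_le ht hz) hδ (by linarith)
end

section
/- Let κ ≥ 2 be an integer, N ≥ 1, and suppose (v_b)_{b ∈ ℤ/Nℤ} are complex numbers such that for every c ∈ (ℤ/Nℤ)^×: ∑_{b ∈ (ℤ/Nℤ)^×} v_b · ζ^{b·c^{-1}}(κ) = 0, where ζ^a(κ) = ∑_{n ≡ a mod N, n ≠ 0} sgn(n)^κ · |n|^{−κ} denotes the partial zeta value summed over all nonzero integers congruent to a mod N (with (−1)^κ weight on negative n). Then v_b + (−1)^κ·v_{−b} = 0 for all b ∈ (ℤ/Nℤ)^×. -/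
/-
Twisting the relations by a Dirichlet character `χ` turns the convolution
`c ↦ ∑_b v_b ζ^{b c⁻¹}(κ)` into the product of `∑_b χ(b) v_b` with
`∑_d χ̄(d) ζ^d(κ) = (1 + (-1)^κ χ(-1)) L(χ̄, κ)`, the latter because
`ζ^a = ζ₊^a + (-1)^κ ζ₊^{-a}` and `∑_d χ̄(d) ζ₊^d(κ) = L(χ̄, κ)`. As `L(χ̄, κ) ≠ 0` for `κ ≥ 2`,
every character sum `∑_b χ(b) (v_b + (-1)^κ v_{-b})` vanishes, and orthogonality of characters
gives the claim.
-/

open Complex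

/-- The partial zeta value `ζ^a(κ) = ∑_{n ≡ a mod N, n ≠ 0} sgn(n)^κ |n|^{-κ}`, summed
over all nonzero integers `n` congruent to `a` mod `N`. -/
noncomputable def zetaPart (N : ℕ) (κ : ℕ) (a : ZMod N) : ℂ :=
  ∑' n : ℤ, if n ≠ 0 ∧ (n : ZMod N) = a then
      ((Int.sign n : ℂ)) ^ κ * (((|n| : ℤ) : ℝ) ^ (-(κ : ℝ)) : ℝ)
    else 0

namespace MulChar

section

variable {R R' : Type*} [CommMonoidWithZero R] [CommSemiring R']

lemma inv_apply_units (χ : MulChar R R') (u : Rˣ) : χ⁻¹ u = χ ↑u⁻¹ := by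
  rw [inv_apply, Ring.inverse_unit]

variable [Fintype Rˣ]

lemma sum_units_mul_ite_eq [DecidableEq R] (χ : MulChar R R') (x : R) :
    ∑ d : Rˣ, χ d * (if x = d then 1 else 0) = χ x := by
  by_cases hx : IsUnit x
  · obtain ⟨u, rfl⟩ := hx
    simp only [Units.val_inj, mul_ite, mul_one, mul_zero, Finset.sum_ite_eq, Finset.mem_univ,
      if_true]
  · rw [χ.map_nonunit hx]
    refine Finset.sum_eq_zero fun d _ => ?_
    rw [if_neg (by rintro rfl; exact hx d.isUnit), mul_zero]

lemma sum_units_mul_mul_sum_inv_mul (χ : MulChar R R') (v F : Rˣ → R') :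
    (∑ b : Rˣ, χ b * v b) * ∑ d : Rˣ, χ⁻¹ d * F d =
      ∑ c : Rˣ, χ c * ∑ b : Rˣ, v b * F (b * c⁻¹) := by
  simp_rw [Finset.sum_mul, Finset.mul_sum]
  conv_rhs => rw [Finset.sum_comm]
  refine Finset.sum_congr rfl fun b _ => (Fintype.sum_equiv (Equiv.divLeft b) _ _ fun c => ?_).symm
  have hχ : χ b * χ⁻¹ ↑(b / c) = χ c := by
    rw [inv_apply_units, ← map_mul, ← Units.val_mul, inv_div, mul_div_cancel]
  rw [Equiv.divLeft_apply, ← div_eq_mul_inv, ← hχ]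
  ring

end

variable {R R' : Type*} [CommRing R] [CommSemiring R']

lemma inv_apply_neg_one (χ : MulChar R R') : χ⁻¹ (-1) = χ (-1) := by
  simpa using χ.inv_apply_units (-1)

lemma sum_units_mul_comp_neg [Fintype Rˣ] (χ : MulChar R R') (f : R → R') :
    ∑ b : Rˣ, χ b * f (-b) = χ (-1) * ∑ b : Rˣ, χ b * f b := by
  rw [Finset.mul_sum]
  refine Fintype.sum_equiv (Equiv.neg Rˣ) _ _ fun b => ?_
  rw [Equiv.neg_apply, Units.val_neg, ← mul_assoc, ← map_mul, neg_one_mul, neg_neg]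

end MulChar

namespace DirichletCharacter

lemma eq_zero_of_forall_sum_units_mul_eq_zero {R : Type*} [CommRing R] [IsDomain R] [CharZero R]
    {N : ℕ} [NeZero N] [HasEnoughRootsOfUnity R (Monoid.exponent (ZMod N)ˣ)] {w : ZMod N → R}
    (h : ∀ χ : DirichletCharacter R N, ∑ b : (ZMod N)ˣ, χ b * w b = 0) (b : (ZMod N)ˣ) :
    w b = 0 := by
  have horth : ∑ χ : DirichletCharacter R N, χ (b : ZMod N)⁻¹ * ∑ a : (ZMod N)ˣ, χ a * w a =
      N.totient * w b := by
    simp_rw [Finset.mul_sum, ← mul_assoc]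
    rw [Finset.sum_comm]
    simp_rw [← Finset.sum_mul, sum_char_inv_mul_char_eq R b.isUnit, ite_mul, zero_mul,
      Units.val_inj, Finset.sum_ite_eq, Finset.mem_univ, if_true]
  simp only [h, mul_zero, Finset.sum_const_zero] at horth
  have htotient : (N.totient : R) ≠ 0 :=
    Nat.cast_ne_zero.mpr (Nat.totient_pos.mpr N.pos_of_neZero).ne'
  exact (mul_eq_zero.mp horth.symm).resolve_left htotient

end DirichletCharacter

/-- `ζ₊^a(s) = ∑_{n ≥ 1, n ≡ a mod N} n^{-s}`. -/
noncomputable def zetaPartPos (N : ℕ) (a : ZMod N) (s : ℂ) : ℂ :=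
  LSeries (fun n => if (n : ZMod N) = a then 1 else 0) s

lemma LSeriesSummable_ite_natCast_eq {N : ℕ} (a : ZMod N) {s : ℂ} (hs : 1 < s.re) :
    LSeriesSummable (fun n => if (n : ZMod N) = a then 1 else 0) s :=
  LSeriesSummable_of_bounded_of_one_lt_re (m := 1) (fun n _ => by split_ifs <;> simp) hs

lemma zetaPart_eq_zetaPartPos_add {N κ : ℕ} (hκ : 1 < κ) (a : ZMod N) :
    zetaPart N κ a = zetaPartPos N a κ + (-1) ^ κ * zetaPartPos N (-a) κ := by
  have hs : 1 < (κ : ℂ).re := by simpa using hκ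
  set f : ℤ → ℂ := fun n => if n ≠ 0 ∧ (n : ZMod N) = a then
      ((Int.sign n : ℂ)) ^ κ * (((|n| : ℤ) : ℝ) ^ (-(κ : ℝ)) : ℝ) else 0 with hf
  have hpos : ∀ n : ℕ, f n = LSeries.term (fun n => if (n : ZMod N) = a then 1 else 0) κ n := by
    intro n
    rcases eq_or_ne n 0 with rfl | hn
    · simp [hf]
    · simp only [hf, LSeries.term_of_ne_zero hn]
      split_ifs <;> simp_all [Int.sign_natCast_of_ne_zero hn]
  have hneg : ∀ n : ℕ, f (-n) =
      (-1) ^ κ * LSeries.term (fun n => if (n : ZMod N) = -a then 1 else 0) κ n := by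
    intro n
    rcases eq_or_ne n 0 with rfl | hn
    · simp [hf]
    · simp only [hf, LSeries.term_of_ne_zero hn]
      split_ifs <;> simp_all [neg_eq_iff_eq_neg, Int.sign_neg, Int.sign_natCast_of_ne_zero hn]
  have hsum := ((LSeriesSummable_ite_natCast_eq a hs).LSeriesHasSum.congr_fun hpos).of_nat_of_neg
    (((LSeriesSummable_ite_natCast_eq (-a) hs).LSeriesHasSum.mul_left ((-1) ^ κ)).congr_fun hneg)
  rw [show f 0 = 0 by simp [hf], sub_zero] at hsum
  exact hsum.tsum_eq

section

variable {N : ℕ} [NeZero N]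

lemma sum_units_mul_zetaPartPos (χ : DirichletCharacter ℂ N) {s : ℂ} (hs : 1 < s.re) :
    ∑ d : (ZMod N)ˣ, χ d * zetaPartPos N d s = LSeries (fun n => χ n) s := by
  simp_rw [zetaPartPos, ← LSeries_smul]
  rw [← LSeries_sum fun d _ => (LSeriesSummable_ite_natCast_eq _ hs).smul _]
  congr 1
  funext n
  simp only [Finset.sum_apply, Pi.smul_apply, smul_eq_mul, χ.sum_units_mul_ite_eq]

lemma sum_units_mul_zetaPart (χ : DirichletCharacter ℂ N) {κ : ℕ} (hκ : 1 < κ) :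
    ∑ d : (ZMod N)ˣ, χ d * zetaPart N κ d =
      (1 + (-1) ^ κ * χ (-1)) * LSeries (fun n => χ n) κ := by
  have hs : 1 < (κ : ℂ).re := by simpa using hκ
  simp_rw [zetaPart_eq_zetaPartPos_add hκ, mul_add, mul_left_comm _ ((-1 : ℂ) ^ κ),
    Finset.sum_add_distrib, ← Finset.mul_sum, χ.sum_units_mul_comp_neg (zetaPartPos N · κ),
    sum_units_mul_zetaPartPos χ hs]
  ring

end

/-- If `κ ≥ 2` and the complex numbers `(v_b)` satisfy
`∑_{b ∈ (ℤ/Nℤ)ˣ} v_b ζ^{b c⁻¹}(κ) = 0` for every `c ∈ (ℤ/Nℤ)ˣ`, then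
`v_b + (-1)^κ v_{-b} = 0` for all `b ∈ (ℤ/Nℤ)ˣ`. -/
theorem stmt_19 (N : ℕ) [NeZero N] (κ : ℕ) (hκ : 2 ≤ κ) (v : ZMod N → ℂ)
    (h : ∀ c : (ZMod N)ˣ,
      ∑ b : (ZMod N)ˣ, v b * zetaPart N κ ((b : ZMod N) * ((c⁻¹ : (ZMod N)ˣ) : ZMod N)) = 0) :
    ∀ b : (ZMod N)ˣ, v b + (-1 : ℂ) ^ κ * v (-(b : ZMod N)) = 0 := by
  refine DirichletCharacter.eq_zero_of_forall_sum_units_mul_eq_zero (R := ℂ)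
    (w := fun a => v a + (-1) ^ κ * v (-a)) fun χ => ?_
  have htwist := χ.sum_units_mul_mul_sum_inv_mul (fun b => v b) (fun d => zetaPart N κ d)
  simp only [Units.val_mul, h, mul_zero, Finset.sum_const_zero, sum_units_mul_zetaPart χ⁻¹ hκ,
    MulChar.inv_apply_neg_one, ← mul_assoc] at htwist
  have hL : LSeries (fun n => χ⁻¹ n) κ ≠ 0 :=
    DirichletCharacter.LSeries_ne_zero_of_one_lt_re χ⁻¹ (by rw [natCast_re]; exact_mod_cast hκ)
  have hvanish := (mul_eq_zero.mp htwist).resolve_right hL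
  simp_rw [mul_add, Finset.sum_add_distrib, mul_left_comm _ ((-1 : ℂ) ^ κ), ← Finset.mul_sum,
    χ.sum_units_mul_comp_neg v]
  linear_combination hvanish
end
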